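/- If ℓ = n·p₁ for a positive integer n, then D(nb(p₁, ℓ) ‖ nb(p₂, ℓ)) = D(bin(n, ℓ/n) ‖ bin(n, p₂)) = n·(p₁·ln(p₁/p₂) + (1−p₁)·ln((1−p₁)/(1−p₂))). -/

import Mathlib

/-!
Both log-likelihood ratios are affine in the outcome `k`:
`log (nb(p, ℓ) k / nb(q, ℓ) k) = ℓ log (p / q) + k log ((1 - p) / (1 - q))` and
`log (bin(n, p) k / bin(n, q) k) = k log (p / q) + (n - k) log ((1 - p) / (1 - q))`.
So each divergence is determined by the total mass and the mean of the first law. The negative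
binomial has mean `ℓ (1 - p) / p`, by the shift
`k nb(p, ℓ) k = ℓ (1 - p) / p · nb(p, ℓ + 1) (k - 1)`, which gives `(ℓ / p) D(p ‖ q)` with `D(p ‖ q)` the Bernoulli divergence; the binomial has mean
`n p`, which gives `n D(p ‖ q)`. The two agree when `ℓ = n p`.
-/

open Finset

/-- Negative binomial point probability `P(W = k) = (Γ(ℓ+k)/(Γ(ℓ)·k!))·p^ℓ·(1−p)^k`. -/
noncomputable def nbPt (l p : ℝ) (k : ℕ) : ℝ :=
  Real.Gamma (l + k) / (Real.Gamma l * (k.factorial : ℝ)) * p ^ l * (1 - p) ^ k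

/-- Binomial point probability `P(M = k) = C(n,k)·p^k·(1−p)^(n−k)`. -/
noncomputable def binPt (n : ℕ) (p : ℝ) (k : ℕ) : ℝ :=
  (n.choose k : ℝ) * p ^ k * (1 - p) ^ (n - k)

open Real

theorem Real.Gamma_add_nat_eq_ascPochhammer_eval_mul {s : ℝ} (hs : ∀ m : ℕ, s ≠ -m) (k : ℕ) :
    Gamma (s + k) = (ascPochhammer ℝ k).eval s * Gamma s := by
  induction k with
  | zero => simp
  | succ k ih =>
    have hsk : s + k ≠ 0 := fun h => hs k (by linarith)
    rw [Nat.cast_succ, ← add_assoc, Gamma_add_one hsk, ih, ascPochhammer_succ_right,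
      Polynomial.eval_mul]
    simp only [Polynomial.eval_add, Polynomial.eval_X, Polynomial.eval_natCast]
    ring

theorem Real.Gamma_add_nat_div_eq_ringChoose {s : ℝ} (hs : ∀ m : ℕ, s ≠ -m) (k : ℕ) :
    Gamma (s + k) / (Gamma s * k.factorial) = Ring.choose (s + k - 1) k := by
  have h := Ring.factorial_nsmul_multichoose_eq_ascPochhammer s k
  rw [Polynomial.ascPochhammer_smeval_eq_eval, nsmul_eq_mul] at h
  rw [← Ring.multichoose_eq, Gamma_add_nat_eq_ascPochhammer_eval_mul hs, ← h]
  have := Gamma_ne_zero hs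
  field_simp

noncomputable def bernoulliKL (p q : ℝ) : ℝ :=
  p * log (p / q) + (1 - p) * log ((1 - p) / (1 - q))

section NegativeBinomial

variable {l p q : ℝ}

-- `Γ(l + k) / (Γ(l) k!) = C(l + k - 1, k)` is the `k`-th coefficient of the binomial series
-- of `(1 - x)^(-l)`, evaluated here at `x = 1 - p`.
theorem hasSum_nbPt (hl : ∀ m : ℕ, l ≠ -m) (hp : 0 < p) (hp' : p < 2) :
    HasSum (nbPt l p) 1 := by
  have hball : 1 - p ∈ Metric.eball (0 : ℝ) 1 := by
    rw [Metric.mem_eball, edist_dist, ENNReal.ofReal_lt_one, dist_0_eq_abs, abs_lt]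
    constructor <;> linarith
  have h := ((one_div_one_sub_rpow_hasFPowerSeriesOnBall_zero l).hasSum hball).mul_right (p ^ l)
  simp only [FormalMultilinearSeries.ofScalars_apply_eq, smul_eq_mul, zero_add, sub_sub_cancel,
    one_div, inv_mul_cancel₀ (rpow_pos_of_pos hp l).ne'] at h
  have hpt : nbPt l p = fun k : ℕ => Ring.choose (l + k - 1) k * (1 - p) ^ k * p ^ l := by
    funext k
    rw [nbPt, Gamma_add_nat_div_eq_ringChoose hl]
    ring
  rwa [hpt]

theorem succ_mul_nbPt_succ (hl : ∀ m : ℕ, l ≠ -m) (hp : p ≠ 0) (k : ℕ) :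
    (k + 1) * nbPt l p (k + 1) = l * (1 - p) / p * nbPt (l + 1) p k := by
  have hl0 : l ≠ 0 := by simpa using hl 0
  have hΓ := Gamma_ne_zero hl
  rw [nbPt, nbPt, Nat.factorial_succ, Gamma_add_one hl0, rpow_add_one hp, Nat.cast_succ,
    ← add_assoc, add_right_comm]
  push_cast
  field_simp
  ring

theorem hasSum_natCast_mul_nbPt (hl : ∀ m : ℕ, l ≠ -m) (hp : 0 < p) (hp' : p < 2) :
    HasSum (fun k : ℕ => k * nbPt l p k) (l * (1 - p) / p) := by
  have hl' : ∀ m : ℕ, l + 1 ≠ -m := fun m h => hl (m + 1) (by push_cast; linarith)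
  have h := (hasSum_nbPt hl' hp hp').mul_left (l * (1 - p) / p)
  rw [mul_one] at h
  simp only [← succ_mul_nbPt_succ hl hp.ne'] at h
  refine (hasSum_nat_add_iff' 1).mp ?_
  simpa using h

theorem log_nbPt_div_nbPt (hl : ∀ m : ℕ, l ≠ -m) (hp : 0 < p) (hp' : p < 1) (hq : 0 < q)
    (hq' : q < 1) (k : ℕ) :
    log (nbPt l p k / nbPt l q k) = l * log (p / q) + k * log ((1 - p) / (1 - q)) := by
  have hk : ∀ m : ℕ, l + k ≠ -m := fun m h => hl (m + k) (by push_cast; linarith)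
  have hΓ := Gamma_ne_zero hl
  have hΓk := Gamma_ne_zero hk
  have hratio : nbPt l p k / nbPt l q k = (p / q) ^ l * ((1 - p) / (1 - q)) ^ k := by
    rw [nbPt, nbPt, div_rpow hp.le hq.le, div_pow]
    have := rpow_pos_of_pos hq l
    have : (0 : ℝ) < (1 - q) ^ k := pow_pos (by linarith) k
    field_simp
  have h1 : 0 < (p / q) ^ l := rpow_pos_of_pos (div_pos hp hq) l
  have h2 : 0 < ((1 - p) / (1 - q)) ^ k := pow_pos (div_pos (by linarith) (by linarith)) k
  rw [hratio, log_mul h1.ne' h2.ne', log_rpow (div_pos hp hq), log_pow]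

theorem hasSum_nbPt_mul_log_div (hl : ∀ m : ℕ, l ≠ -m) (hp : 0 < p) (hp' : p < 1) (hq : 0 < q)
    (hq' : q < 1) :
    HasSum (fun k => nbPt l p k * log (nbPt l p k / nbPt l q k)) (l / p * bernoulliKL p q) := by
  have h := ((hasSum_nbPt hl hp (by linarith)).mul_left (l * log (p / q))).add
    ((hasSum_natCast_mul_nbPt hl hp (by linarith)).mul_left (log ((1 - p) / (1 - q))))
  have hsum : l / p * bernoulliKL p q
      = l * log (p / q) * 1 + log ((1 - p) / (1 - q)) * (l * (1 - p) / p) := by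
    unfold bernoulliKL
    field_simp
  rw [hsum]
  refine h.congr_fun fun k => ?_
  rw [log_nbPt_div_nbPt hl hp hp' hq hq']
  ring

end NegativeBinomial

theorem sum_binPt (n : ℕ) (p : ℝ) : ∑ k ∈ range (n + 1), binPt n p k = 1 := by
  have h := add_pow p (1 - p) n
  rw [add_sub_cancel, one_pow] at h
  rw [h]
  exact sum_congr rfl fun k _ => by rw [binPt]; ring

theorem succ_mul_binPt_succ (n : ℕ) (p : ℝ) (k : ℕ) :
    (k + 1) * binPt (n + 1) p (k + 1) = (n + 1) * p * binPt n p k := by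
  have h : ((n + 1).choose (k + 1) : ℝ) * (k + 1) = (n + 1) * n.choose k := by
    exact_mod_cast (Nat.add_one_mul_choose_eq n k).symm
  rw [binPt, binPt, Nat.add_sub_add_right, pow_succ]
  linear_combination (p ^ k * p * (1 - p) ^ (n - k)) * h

theorem sum_natCast_mul_binPt (n : ℕ) (p : ℝ) :
    ∑ k ∈ range (n + 1), (k : ℝ) * binPt n p k = n * p := by
  cases n with
  | zero => simp
  | succ n =>
    rw [sum_range_succ']
    simp only [Nat.cast_succ, succ_mul_binPt_succ, ← mul_sum, sum_binPt]
    simp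

theorem log_binPt_div_binPt {n k : ℕ} {p q : ℝ} (hp : 0 < p) (hp' : p < 1) (hq : 0 < q)
    (hq' : q < 1) (hk : k ≤ n) :
    log (binPt n p k / binPt n q k) = k * log (p / q) + (n - k : ℕ) * log ((1 - p) / (1 - q)) := by
  have hC : (n.choose k : ℝ) ≠ 0 := by exact_mod_cast (Nat.choose_pos hk).ne'
  have hratio : binPt n p k / binPt n q k = (p / q) ^ k * ((1 - p) / (1 - q)) ^ (n - k) := by
    rw [binPt, binPt, div_pow, div_pow]
    have : (0 : ℝ) < (1 - q) ^ (n - k) := pow_pos (by linarith) _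
    have := pow_pos hq k
    field_simp
  have h1 : 0 < (p / q) ^ k := pow_pos (div_pos hp hq) k
  have h2 : 0 < ((1 - p) / (1 - q)) ^ (n - k) := pow_pos (div_pos (by linarith) (by linarith)) _
  rw [hratio, log_mul h1.ne' h2.ne', log_pow, log_pow]

theorem sum_binPt_mul_log_div {n : ℕ} {p q : ℝ} (hp : 0 < p) (hp' : p < 1) (hq : 0 < q)
    (hq' : q < 1) :
    ∑ k ∈ range (n + 1), binPt n p k * log (binPt n p k / binPt n q k) = n * bernoulliKL p q := by
  have hterm : ∀ k ∈ range (n + 1), binPt n p k * log (binPt n p k / binPt n q k)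
      = log (p / q) * (k * binPt n p k)
        + log ((1 - p) / (1 - q)) * (n * binPt n p k - k * binPt n p k) := by
    intro k hk
    have hkn : k ≤ n := Nat.lt_succ_iff.mp (mem_range.mp hk)
    rw [log_binPt_div_binPt hp hp' hq hq' hkn, Nat.cast_sub hkn]
    ring
  rw [sum_congr rfl hterm, sum_add_distrib, ← mul_sum, ← mul_sum, sum_sub_distrib, ← mul_sum,
    sum_natCast_mul_binPt, sum_binPt, bernoulliKL]
  ring

/-- If `ℓ = n·p₁` for a positive integer `n`, then
`D(nb(p₁,ℓ) ‖ nb(p₂,ℓ)) = D(bin(n, ℓ/n) ‖ bin(n, p₂))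
  = n·(p₁·ln(p₁/p₂) + (1−p₁)·ln((1−p₁)/(1−p₂)))`. -/
theorem stmt_10 (n : ℕ) (hn : 0 < n) (p₁ p₂ l : ℝ)
    (hp₁ : 0 < p₁) (hp₁' : p₁ < 1) (hp₂ : 0 < p₂) (hp₂' : p₂ < 1) (hl : l = n * p₁) :
    (∑' k : ℕ, nbPt l p₁ k * Real.log (nbPt l p₁ k / nbPt l p₂ k))
        = ∑ k ∈ range (n + 1),
            binPt n (l / n) k * Real.log (binPt n (l / n) k / binPt n p₂ k) ∧
    (∑ k ∈ range (n + 1),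
        binPt n (l / n) k * Real.log (binPt n (l / n) k / binPt n p₂ k))
      = n * (p₁ * Real.log (p₁ / p₂) + (1 - p₁) * Real.log ((1 - p₁) / (1 - p₂))) := by
  have hn' : (n : ℝ) ≠ 0 := by exact_mod_cast hn.ne'
  have hl₁ : l / n = p₁ := by rw [hl]; field_simp
  have hl₂ : l / p₁ = n := by rw [hl]; field_simp
  have hl₀ : ∀ m : ℕ, l ≠ -m := fun m =>
    ((neg_nonpos.mpr m.cast_nonneg).trans_lt (by rw [hl]; positivity)).ne'
  rw [hl₁, sum_binPt_mul_log_div hp₁ hp₁' hp₂ hp₂',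
    (hasSum_nbPt_mul_log_div hl₀ hp₁ hp₁' hp₂ hp₂').tsum_eq, hl₂]
  exact ⟨rfl, rfl⟩
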